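/- Let g ≥ 1, N ≥ 0 and n ≥ 0 be integers, let C ∈ ℝ, C' ≥ 0, and let Q ≥ 2 be a real number. Let G : ℝ → ℝ be a 1-periodic function and V a real trigonometric polynomial of degree at most N such that G(θ) ≤ V(θ) for every θ ∈ ℝ, V̂(0) = C/(N+1)^{n+1}, and |V̂(k)| ≤ C' for every integer k with 1 ≤ |k| ≤ N. Suppose θ_1, …, θ_{2g} ∈ ℝ satisfy |∑_{j=1}^{2g} e(k θ_j)| ≤ Q^{|k|/2} for every integer k with 1 ≤ |k| ≤ N. Then for every θ ∈ ℝ: ∑_{j=1}^{2g} G(θ − θ_j) ≤ 2g·C/(N+1)^{n+1} + 2N·C'·Q^{N/2}. -/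

import Mathlib

/-!
Since `G ≤ V`, it suffices to bound `∑ⱼ V(θ - θⱼ)`. Expanding `V` in its Fourier series turns
this into `∑ₖ V̂(k) e(kθ) ∑ⱼ e(-kθⱼ)`: the frequency `k = 0` gives the main term `2g V̂(0)`, and
each of the `2N` other frequencies is at most `C' Q^{N/2}` in absolute value by the bound on the
exponential sums over the angles `θⱼ`.
-/

open Polynomial

noncomputable section

open scoped Classical

/-- `e(x) = e^{2πix}`. -/
def e2pi (x : ℝ) : ℂ := Complex.exp (2 * Real.pi * Complex.I * x)

/-- The sawtooth function `𝓑₁`. -/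
noncomputable def sawtooth (x : ℝ) : ℝ :=
  if ∃ n : ℤ, x = (n : ℝ) then 0 else x - ⌊x⌋ - 1 / 2

/-- The Bernoulli periodic function `𝓑ₙ`. -/
noncomputable def bernoulliPeriodic (n : ℕ) (x : ℝ) : ℝ :=
  if n = 1 then sawtooth x else bernoulliFun n (Int.fract x)

/-- `Mₙ = max_{x ∈ [0,1]} Bₙ(x)`. -/
def bernoulliMax (n : ℕ) : ℝ := sSup (bernoulliFun n '' Set.Icc (0 : ℝ) 1)

/-- `mₙ = min_{x ∈ [0,1]} Bₙ(x)`. -/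
def bernoulliMin (n : ℕ) : ℝ := sInf (bernoulliFun n '' Set.Icc (0 : ℝ) 1)

/-- A real trigonometric polynomial of degree at most `N`. -/
def IsTrigPoly (N : ℕ) (T : ℝ → ℝ) : Prop :=
  ∃ a : ℤ → ℂ, ∀ θ : ℝ, (T θ : ℂ) = ∑ k ∈ Finset.Icc (-(N : ℤ)) (N : ℤ), a k * e2pi (k * θ)

/-- The `k`-th Fourier coefficient of a `1`-periodic function. -/
def fourierCoeff' (f : ℝ → ℝ) (k : ℤ) : ℂ := ∫ θ in (0:ℝ)..1, (f θ : ℂ) * e2pi (-(k * θ))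

/-- The normalized periodic indicator function of the interval `[α, β]`. -/
noncomputable def periodicIndicator (α β θ : ℝ) : ℝ :=
  if ∃ n : ℤ, θ + (n : ℝ) ∈ Set.Ioo α β then 1
  else if ∃ n : ℤ, θ + (n : ℝ) = α ∨ θ + (n : ℝ) = β then 1 / 2
  else 0

variable (F : Type) [Field F] [Fintype F]

/-- The quadratic residue symbol `(f/P)` modulo a prime polynomial `P`. -/
noncomputable def quadResSymbol (P f : Polynomial F) : ℤ :=
  if P ∣ f then 0 else if ∃ g : Polynomial F, P ∣ (g ^ 2 - f) then 1 else -1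

/-- `χ` is the quadratic character `χ_D`: completely multiplicative on monic polynomials,
with `χ(Q) = (D/Q)` for every prime polynomial `Q`. -/
def IsQuadCharOf (D : Polynomial F) (χ : Polynomial F → ℝ) : Prop :=
  χ 1 = 1 ∧
  (∀ f h : Polynomial F, f.Monic → h.Monic → χ (f * h) = χ f * χ h) ∧
  ∀ Q : Polynomial F, Q.Monic → Irreducible Q → χ Q = (quadResSymbol F Q D : ℝ)

/-- `c_k = ∑_{f monic, deg f = k} χ(f)`. -/
def coeffSum (χ : Polynomial F → ℝ) (k : ℕ) : ℝ :=
  ∑ᶠ f ∈ {f : Polynomial F | f.Monic ∧ f.natDegree = k}, χ f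

/-- The von Mangoldt function for monic polynomials. -/
noncomputable def polyVonMangoldt (f : Polynomial F) : ℝ :=
  if h : ∃ P : Polynomial F, (P.Monic ∧ Irreducible P) ∧ ∃ m : ℕ, 1 ≤ m ∧ f = P ^ m
  then ((Classical.choose h).natDegree : ℝ) else 0

/-- The factorization of `𝓛(u, χ_D) = ∑ c_k u^k` over its zeros `q^{-1/2} e(θⱼ)`. -/
def LFactorization (χ : Polynomial F → ℝ) (g : ℕ) (θz : Fin (2 * g) → ℝ) : Prop :=
  ∀ u : ℂ, ‖u‖ < 1 / (Fintype.card F : ℝ) →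
    HasSum (fun k : ℕ => (coeffSum F χ k : ℂ) * u ^ k)
      (∏ j : Fin (2 * g), (1 - u * (Real.sqrt (Fintype.card F) : ℂ) * e2pi (-(θz j))))

def expSum {ι : Type*} [Fintype ι] (θz : ι → ℝ) (k : ℤ) : ℂ := ∑ j, e2pi (k * θz j)

lemma e2pi_add (x y : ℝ) : e2pi (x + y) = e2pi x * e2pi y := by
  simp only [e2pi, Complex.ofReal_add, ← Complex.exp_add]
  ring_nf

@[simp]
lemma e2pi_zero : e2pi 0 = 1 := by simp [e2pi]

@[simp]
lemma norm_e2pi (x : ℝ) : ‖e2pi x‖ = 1 := by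
  rw [e2pi, Complex.norm_exp]
  simp [Complex.mul_re, Complex.mul_im]

lemma continuous_e2pi : Continuous e2pi := by
  unfold e2pi
  fun_prop

lemma integral_e2pi_int_mul (m : ℤ) :
    ∫ θ in (0 : ℝ)..1, e2pi (m * θ) = if m = 0 then 1 else 0 := by
  split_ifs with hm
  · simp [hm]
  · have hc : 2 * (Real.pi : ℂ) * Complex.I * m ≠ 0 := by
      simp [Real.pi_ne_zero, Complex.I_ne_zero, hm]
    have he : ∀ θ : ℝ, e2pi (m * θ) = Complex.exp (2 * Real.pi * Complex.I * m * θ) := by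
      intro θ
      simp only [e2pi, Complex.ofReal_mul, Complex.ofReal_intCast]
      ring_nf
    have hperiod : Complex.exp (2 * Real.pi * Complex.I * m * (1 : ℝ)) = 1 := by
      rw [show 2 * Real.pi * Complex.I * m * ((1 : ℝ) : ℂ) = m * (2 * Real.pi * Complex.I) by
        push_cast; ring]
      exact Complex.exp_int_mul_two_pi_mul_I m
    rw [intervalIntegral.integral_congr fun θ _ => he θ, integral_exp_mul_complex hc, hperiod]
    simp

lemma fourierCoeff'_eq_of_eq_sum {V : ℝ → ℝ} {s : Finset ℤ} {a : ℤ → ℂ}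
    (hV : ∀ θ : ℝ, (V θ : ℂ) = ∑ j ∈ s, a j * e2pi (j * θ)) {k : ℤ} (hk : k ∈ s) :
    fourierCoeff' V k = a k := by
  have hshift : ∀ θ : ℝ, (V θ : ℂ) * e2pi (-(k * θ)) =
      ∑ j ∈ s, a j * e2pi (((j - k : ℤ) : ℝ) * θ) := by
    intro θ
    rw [hV θ, Finset.sum_mul]
    refine Finset.sum_congr rfl fun j _ => ?_
    rw [mul_assoc, ← e2pi_add]
    push_cast
    ring_nf
  have hint : ∀ j ∈ s, IntervalIntegrable (fun θ : ℝ => a j * e2pi (((j - k : ℤ) : ℝ) * θ))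
      MeasureTheory.volume 0 1 := fun j _ =>
    (continuous_const.mul (continuous_e2pi.comp (continuous_const_mul _))).intervalIntegrable _ _
  rw [fourierCoeff', intervalIntegral.integral_congr fun θ _ => hshift θ,
    intervalIntegral.integral_finsetSum hint]
  simp_rw [intervalIntegral.integral_const_mul, integral_e2pi_int_mul, sub_eq_zero, mul_ite,
    mul_one, mul_zero]
  rw [Finset.sum_ite_eq' s k, if_pos hk]

lemma sum_translates_eq_sum_expSum {ι : Type*} [Fintype ι] {V : ℝ → ℝ} {s : Finset ℤ}
    {a : ℤ → ℂ} (hV : ∀ θ : ℝ, (V θ : ℂ) = ∑ k ∈ s, a k * e2pi (k * θ)) (θz : ι → ℝ) (θ : ℝ) :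
    ((∑ j, V (θ - θz j) : ℝ) : ℂ) = ∑ k ∈ s, a k * e2pi (k * θ) * expSum θz (-k) := by
  push_cast
  simp_rw [hV, expSum, Finset.mul_sum]
  rw [Finset.sum_comm]
  refine Finset.sum_congr rfl fun k _ => Finset.sum_congr rfl fun j _ => ?_
  rw [mul_assoc, ← e2pi_add]
  push_cast
  ring_nf

lemma sum_translates_le {ι : Type*} [Fintype ι] {V : ℝ → ℝ} {s : Finset ℤ} {a : ℤ → ℂ}
    (hV : ∀ θ : ℝ, (V θ : ℂ) = ∑ k ∈ s, a k * e2pi (k * θ)) (hs : 0 ∈ s) (θz : ι → ℝ) {B : ℝ}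
    (hB : ∀ k ∈ s.erase 0, ‖a k‖ * ‖expSum θz (-k)‖ ≤ B) (θ : ℝ) :
    ∑ j, V (θ - θz j) ≤ Fintype.card ι * (a 0).re + (s.erase 0).card * B := by
  set f : ℤ → ℂ := fun k => a k * e2pi (k * θ) * expSum θz (-k)
  have hf0 : f 0 = ((Fintype.card ι : ℝ) : ℂ) * a 0 := by
    simp [f, expSum, mul_comm]
  have hfB : ∀ k ∈ s.erase 0, ‖f k‖ ≤ B := fun k hk => by
    simpa [f] using hB k hk
  calc ∑ j, V (θ - θz j)
      = (f 0 + ∑ k ∈ s.erase 0, f k).re := by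
        rw [Finset.add_sum_erase s f hs, ← sum_translates_eq_sum_expSum hV, Complex.ofReal_re]
    _ ≤ (f 0).re + ‖∑ k ∈ s.erase 0, f k‖ := by
        rw [Complex.add_re]
        exact add_le_add_right (Complex.re_le_norm _) _
    _ ≤ Fintype.card ι * (a 0).re + (s.erase 0).card * B := by
        rw [hf0, Complex.re_ofReal_mul]
        gcongr
        simpa using norm_sum_le_of_le _ hfB

theorem statement17_general (g N n : ℕ) (C C' Q : ℝ) (hC' : 0 ≤ C') (hQ : 2 ≤ Q)
    (G : ℝ → ℝ)
    (V : ℝ → ℝ) (hV : IsTrigPoly N V)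
    (hmaj : ∀ θ : ℝ, G θ ≤ V θ)
    (hV0 : fourierCoeff' V 0 = ((C / (N + 1) ^ (n + 1) : ℝ) : ℂ))
    (hVk : ∀ k : ℤ, 1 ≤ |k| → |k| ≤ (N : ℤ) → ‖fourierCoeff' V k‖ ≤ C')
    (θz : Fin (2 * g) → ℝ)
    (hzeros : ∀ k : ℤ, 1 ≤ |k| → |k| ≤ (N : ℤ) →
      ‖∑ j : Fin (2 * g), e2pi ((k : ℝ) * θz j)‖ ≤ Q ^ (|(k : ℝ)| / 2)) :
    ∀ θ : ℝ, ∑ j : Fin (2 * g), G (θ - θz j)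
      ≤ 2 * (g : ℝ) * C / (N + 1) ^ (n + 1) + 2 * (N : ℝ) * C' * Q ^ ((N : ℝ) / 2) := by
  intro θ
  obtain ⟨a, ha⟩ := hV
  have h0 : (0 : ℤ) ∈ Finset.Icc (-(N : ℤ)) N := by simp
  have hcard : ((Finset.Icc (-(N : ℤ)) N).erase 0).card = 2 * N := by
    rw [Finset.card_erase_of_mem h0, Int.card_Icc]
    omega
  have hB : ∀ k ∈ (Finset.Icc (-(N : ℤ)) N).erase 0,
      ‖a k‖ * ‖expSum θz (-k)‖ ≤ C' * Q ^ ((N : ℝ) / 2) := by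
    intro k hk
    obtain ⟨hk0, hkN⟩ := Finset.mem_erase.1 hk
    have hk1 : 1 ≤ |k| := Int.one_le_abs hk0
    have hkN' : |k| ≤ N := abs_le.2 (Finset.mem_Icc.1 hkN)
    have hexp : |((-k : ℤ) : ℝ)| / 2 ≤ (N : ℝ) / 2 := by
      rw [Int.cast_neg, abs_neg, ← Int.cast_abs]
      gcongr
      exact_mod_cast hkN'
    rw [← fourierCoeff'_eq_of_eq_sum ha hkN]
    refine mul_le_mul (hVk k hk1 hkN') ?_ (norm_nonneg _) hC'
    refine (hzeros (-k) (by rwa [abs_neg]) (by rwa [abs_neg])).trans ?_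
    exact Real.rpow_le_rpow_of_exponent_le (by linarith) hexp
  have ha0 : a 0 = ((C / (N + 1) ^ (n + 1) : ℝ) : ℂ) := by
    rw [← fourierCoeff'_eq_of_eq_sum ha h0, hV0]
  calc ∑ j, G (θ - θz j) ≤ ∑ j, V (θ - θz j) := Finset.sum_le_sum fun j _ => hmaj _
    _ ≤ _ := sum_translates_le ha h0 θz hB θ
    _ = _ := by
      rw [ha0, hcard, Complex.ofReal_re, Fintype.card_fin]
      push_cast
      ring

/-- the unified estimate bounding a sum of translates of a periodic
function via a one-sided trigonometric approximant. -/
theorem statement17 (g N n : ℕ) (hg : 1 ≤ g) (C C' Q : ℝ) (hC' : 0 ≤ C') (hQ : 2 ≤ Q)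
    (G : ℝ → ℝ) (hGper : ∀ θ : ℝ, G (θ + 1) = G θ)
    (V : ℝ → ℝ) (hV : IsTrigPoly N V)
    (hmaj : ∀ θ : ℝ, G θ ≤ V θ)
    (hV0 : fourierCoeff' V 0 = ((C / (N + 1) ^ (n + 1) : ℝ) : ℂ))
    (hVk : ∀ k : ℤ, 1 ≤ |k| → |k| ≤ (N : ℤ) → ‖fourierCoeff' V k‖ ≤ C')
    (θz : Fin (2 * g) → ℝ)
    (hzeros : ∀ k : ℤ, 1 ≤ |k| → |k| ≤ (N : ℤ) →
      ‖∑ j : Fin (2 * g), e2pi ((k : ℝ) * θz j)‖ ≤ Q ^ (|(k : ℝ)| / 2)) :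
    ∀ θ : ℝ, ∑ j : Fin (2 * g), G (θ - θz j)
      ≤ 2 * (g : ℝ) * C / (N + 1) ^ (n + 1) + 2 * (N : ℝ) * C' * Q ^ ((N : ℝ) / 2) :=
  statement17_general g N n C C' Q hC' hQ G V hV hmaj hV0 hVk θz hzeros

end
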